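/- arXiv:2603.00849 — 2 statements merged into one kernel-verified Lean document; each statement's English description precedes it below -/
import Mathlib

section
/- Adjoint factorization of the cross-covariance operator. Let 𝒳_A, 𝒳_{A^c}, and 𝒴 be measurable spaces, let H_A, H_c, G be real separable Hilbert spaces, and let Φ_A : 𝒳_A → H_A, Φ_c : 𝒳_{A^c} → H_c, ψ : 𝒴 → G be bounded measurable maps. Suppose there exists e ∈ H_c with ⟨e, Φ_c(u)⟩ = 1 for every u ∈ 𝒳_{A^c}. Let ℙ be a joint law on 𝒳_A × 𝒳_{A^c} × 𝒴, define the full feature map Φ(x_A, u) := Φ_A(x_A) ⊗ Φ_c(u) ∈ H_A ⊗̂ H_c, and let C_{XY} : G → H_A ⊗̂ H_c and C_{X_A Y} : G → H_A be the cross-covariance operators of (Φ, ψ) under the law of ((X_A, X_{A^c}), Y) and of (Φ_A, ψ) under the law of (X_A, Y), respectively. Let ι : H_A → H_A ⊗̂ H_c be the bounded linear map ι(f) := f ⊗ e with adjoint ι*. Then C_{X_A Y} = ι* ∘ C_{XY}. -/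
open MeasureTheory
open scoped RealInnerProductSpace

/-- The rank-one operator `u ⊗ v : G → H`, `g ↦ ⟪v, g⟫ u`. -/
noncomputable def rankOne {H G : Type*}
    [NormedAddCommGroup H] [InnerProductSpace ℝ H]
    [NormedAddCommGroup G] [InnerProductSpace ℝ G]
    (u : H) (v : G) : G →L[ℝ] H :=
  (innerSL ℝ v).smulRight u

/-- The cross-covariance operator of the feature maps `Φ` and `ψ` under the joint
law `μ` on `𝒳 × 𝒴`:
`C := ∫ (Φ(x) - m_X) ⊗ (ψ(y) - m_Y) dμ(x,y)` (Bochner integral), where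
`m_X := ∫ Φ dμ_X` and `m_Y := ∫ ψ dμ_Y` are the means under the marginals. -/
noncomputable def crossCov {𝒳 𝒴 H G : Type*}
    [MeasurableSpace 𝒳] [MeasurableSpace 𝒴]
    [NormedAddCommGroup H] [InnerProductSpace ℝ H] [CompleteSpace H]
    [NormedAddCommGroup G] [InnerProductSpace ℝ G] [CompleteSpace G]
    (μ : Measure (𝒳 × 𝒴)) (Φ : 𝒳 → H) (ψ : 𝒴 → G) : G →L[ℝ] H :=
  ∫ q, rankOne (Φ q.1 - ∫ x, Φ x ∂(μ.map Prod.fst))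
               (ψ q.2 - ∫ y, ψ y ∂(μ.map Prod.snd)) ∂μ

/-- Composing a rank-one operator with a continuous linear map on the left. -/
lemma comp_rankOne' {H H' G : Type*} [NormedAddCommGroup H] [InnerProductSpace ℝ H]
    [NormedAddCommGroup H'] [InnerProductSpace ℝ H']
    [NormedAddCommGroup G] [InnerProductSpace ℝ G]
    (L : H →L[ℝ] H') (u : H) (v : G) : L.comp (rankOne u v) = rankOne (L u) v := by
  ext g; simp [rankOne]

lemma norm_rankOne_le' {H G : Type*} [NormedAddCommGroup H] [InnerProductSpace ℝ H]
    [NormedAddCommGroup G] [InnerProductSpace ℝ G]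
    (u : H) (v : G) : ‖rankOne u v‖ ≤ ‖u‖ * ‖v‖ := by
  rw [rankOne, ContinuousLinearMap.norm_smulRight_apply, innerSL_apply_norm]
  exact le_of_eq (mul_comm _ _)

lemma continuous_rankOne' {H G : Type*} [NormedAddCommGroup H] [InnerProductSpace ℝ H]
    [NormedAddCommGroup G] [InnerProductSpace ℝ G] :
    Continuous (fun p : H × G => rankOne p.1 p.2) := by
  have h : (fun p : H × G => rankOne p.1 p.2)
      = fun p : H × G => ContinuousLinearMap.smulRightL ℝ G H ((innerSL ℝ) p.2) p.1 := rfl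
  rw [h]
  exact (ContinuousLinearMap.smulRightL ℝ G H).continuous₂.comp
    ((((innerSL ℝ).continuous.comp continuous_snd)).prodMk continuous_fst)

/-- Change of variables for the cross-covariance operator. -/
lemma crossCov_map_eq {Z 𝒳 𝒴 H G : Type*}
    [MeasurableSpace Z] [MeasurableSpace 𝒳] [MeasurableSpace 𝒴]
    [NormedAddCommGroup H] [InnerProductSpace ℝ H] [CompleteSpace H]
    [NormedAddCommGroup G] [InnerProductSpace ℝ G] [CompleteSpace G]
    {μ : Measure Z} {p : Z → 𝒳 × 𝒴} (hp : Measurable p)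
    {Φ : 𝒳 → H} (hΦ : StronglyMeasurable Φ) {ψ : 𝒴 → G} (hψ : StronglyMeasurable ψ) :
    crossCov (μ.map p) Φ ψ =
      ∫ z, rankOne (Φ (p z).1 - ∫ z', Φ (p z').1 ∂μ)
                   (ψ (p z).2 - ∫ z', ψ (p z').2 ∂μ) ∂μ := by
  rw [crossCov, Measure.map_map measurable_fst hp, Measure.map_map measurable_snd hp,
    integral_map (measurable_fst.comp hp).aemeasurable hΦ.aestronglyMeasurable,
    integral_map (measurable_snd.comp hp).aemeasurable hψ.aestronglyMeasurable]
  exact integral_map hp.aemeasurable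
    ((continuous_rankOne'.comp_stronglyMeasurable
      (((hΦ.comp_measurable measurable_fst).sub stronglyMeasurable_const).prodMk
       ((hψ.comp_measurable measurable_snd).sub stronglyMeasurable_const)))).aestronglyMeasurable

/-- Adjoint factorization of the cross-covariance operator.
Let `𝒳A`, `𝒳c`, `𝒴` be measurable spaces, `H_A`, `H_c`, `G` real separable Hilbert
spaces, `Φ_A`, `Φ_c`, `ψ` bounded measurable feature maps, and suppose `e ∈ H_c`
satisfies `⟪e, Φ_c u⟫ = 1` for every `u`.  Let `T = H_A ⊗̂ H_c` be the completed
Hilbert tensor product (presented through a bilinear map `tens` satisfying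
`⟪f₁ ⊗ g₁, f₂ ⊗ g₂⟫ = ⟪f₁, f₂⟫⟪g₁, g₂⟫` on elementary tensors), let `ℙ` be a joint
probability law on `𝒳A × 𝒳c × 𝒴`, let the full feature map be
`Φ(x_A, u) = Φ_A(x_A) ⊗ Φ_c(u)`, and let `C_XY : G → T`, `C_AY : G → H_A` be the
corresponding cross-covariance operators.  If `ι : H_A → T` is the bounded linear map
`ι f = f ⊗ e`, then `C_AY = ι* ∘ C_XY`. -/
theorem crossCov_marginal_eq_adjoint_comp
    {𝒳A 𝒳c 𝒴 : Type*} [MeasurableSpace 𝒳A] [MeasurableSpace 𝒳c] [MeasurableSpace 𝒴]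
    {HA Hc G T : Type*}
    [NormedAddCommGroup HA] [InnerProductSpace ℝ HA] [CompleteSpace HA]
    [TopologicalSpace.SeparableSpace HA] [MeasurableSpace HA] [BorelSpace HA]
    [NormedAddCommGroup Hc] [InnerProductSpace ℝ Hc] [CompleteSpace Hc]
    [TopologicalSpace.SeparableSpace Hc] [MeasurableSpace Hc] [BorelSpace Hc]
    [NormedAddCommGroup G] [InnerProductSpace ℝ G] [CompleteSpace G]
    [TopologicalSpace.SeparableSpace G] [MeasurableSpace G] [BorelSpace G]
    [NormedAddCommGroup T] [InnerProductSpace ℝ T] [CompleteSpace T]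
    (tens : HA →ₗ[ℝ] Hc →ₗ[ℝ] T)
    (htens : ∀ (f₁ f₂ : HA) (g₁ g₂ : Hc),
      ⟪tens f₁ g₁, tens f₂ g₂⟫ = ⟪f₁, f₂⟫ * ⟪g₁, g₂⟫)
    (ΦA : 𝒳A → HA) (hΦA_meas : Measurable ΦA) (hΦA_bdd : ∃ C : ℝ, ∀ x, ‖ΦA x‖ ≤ C)
    (Φc : 𝒳c → Hc) (hΦc_meas : Measurable Φc) (hΦc_bdd : ∃ C : ℝ, ∀ u, ‖Φc u‖ ≤ C)
    (ψ : 𝒴 → G) (hψ_meas : Measurable ψ) (hψ_bdd : ∃ C : ℝ, ∀ y, ‖ψ y‖ ≤ C)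
    (e : Hc) (he : ∀ u : 𝒳c, ⟪e, Φc u⟫ = 1)
    (ℙ : Measure (𝒳A × 𝒳c × 𝒴)) [IsProbabilityMeasure ℙ]
    (ι : HA →L[ℝ] T) (hι : ∀ f : HA, ι f = tens f e)
    (CXY : G →L[ℝ] T)
    (hCXY : CXY = crossCov (ℙ.map fun q => ((q.1, q.2.1), q.2.2))
      (fun x : 𝒳A × 𝒳c => tens (ΦA x.1) (Φc x.2)) ψ)
    (CAY : G →L[ℝ] HA)
    (hCAY : CAY = crossCov (ℙ.map fun q => (q.1, q.2.2)) ΦA ψ) :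
    CAY = (ContinuousLinearMap.adjoint ι).comp CXY := by
  haveI : SecondCountableTopology HA := UniformSpace.secondCountable_of_separable HA
  haveI : SecondCountableTopology Hc := UniformSpace.secondCountable_of_separable Hc
  haveI : SecondCountableTopology G := UniformSpace.secondCountable_of_separable G
  obtain ⟨CA, hCA⟩ := hΦA_bdd
  obtain ⟨Cc, hCc⟩ := hΦc_bdd
  obtain ⟨Cg, hCg⟩ := hψ_bdd
  -- the space is nonempty, so the bounds are nonnegative
  have hne : Nonempty (𝒳A × 𝒳c × 𝒴) := by
    by_contra h
    rw [not_nonempty_iff] at h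
    have h1 := measure_univ (μ := ℙ)
    rw [Set.univ_eq_empty_iff.mpr h, measure_empty] at h1
    exact zero_ne_one h1
  obtain ⟨x0, u0, y0⟩ := hne
  have hCA0 : (0:ℝ) ≤ CA := (norm_nonneg _).trans (hCA x0)
  have hCc0 : (0:ℝ) ≤ Cc := (norm_nonneg _).trans (hCc u0)
  have hCg0 : (0:ℝ) ≤ Cg := (norm_nonneg _).trans (hCg y0)
  -- norm of elementary tensors
  have htnorm : ∀ (f : HA) (g : Hc), ‖tens f g‖ = ‖f‖ * ‖g‖ := by
    intro f g
    have h := htens f f g g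
    rw [real_inner_self_eq_norm_mul_norm, real_inner_self_eq_norm_mul_norm,
      real_inner_self_eq_norm_mul_norm] at h
    refine (mul_self_inj (norm_nonneg (tens f g))
      (mul_nonneg (norm_nonneg f) (norm_nonneg g))).mp ?_
    rw [h]; ring
  -- adjoint of ι on elementary tensors
  have hadj : ∀ (f : HA) (g : Hc),
      (ContinuousLinearMap.adjoint ι) (tens f g) = ⟪e, g⟫ • f := by
    intro f g
    refine ext_inner_right ℝ (fun f' => ?_)
    rw [ContinuousLinearMap.adjoint_inner_left, hι, htens, real_inner_smul_left,
      real_inner_comm g e]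
    ring
  -- a continuous version of `tens`
  set tensC : HA →L[ℝ] Hc →L[ℝ] T :=
    LinearMap.mkContinuous₂ tens 1
      (fun f g => le_of_eq (by rw [htnorm, one_mul])) with htensC
  -- strong measurability of the full feature map
  have hΦ_sm : StronglyMeasurable (fun x : 𝒳A × 𝒳c => tens (ΦA x.1) (Φc x.2)) := by
    have h1 : StronglyMeasurable (fun x : 𝒳A × 𝒳c => (ΦA x.1, Φc x.2)) :=
      ((hΦA_meas.comp measurable_fst).stronglyMeasurable).prodMk
        ((hΦc_meas.comp measurable_snd).stronglyMeasurable)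
    exact tensC.continuous₂.comp_stronglyMeasurable h1
  have hψ_sm : StronglyMeasurable ψ := hψ_meas.stronglyMeasurable
  have hΦA_sm : StronglyMeasurable ΦA := hΦA_meas.stronglyMeasurable
  have hbig : Measurable (fun q : 𝒳A × 𝒳c × 𝒴 => ((q.1, q.2.1), q.2.2)) :=
    (measurable_fst.prodMk (measurable_fst.comp measurable_snd)).prodMk
      (measurable_snd.comp measurable_snd)
  have hsml : Measurable (fun q : 𝒳A × 𝒳c × 𝒴 => (q.1, q.2.2)) :=
    measurable_fst.prodMk (measurable_snd.comp measurable_snd)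
  -- strong measurability of the ℙ-level feature maps
  have hΦP_sm : StronglyMeasurable (fun q : 𝒳A × 𝒳c × 𝒴 => tens (ΦA q.1) (Φc q.2.1)) :=
    hΦ_sm.comp_measurable (measurable_fst.prodMk (measurable_fst.comp measurable_snd))
  have hψP_sm : StronglyMeasurable (fun q : 𝒳A × 𝒳c × 𝒴 => ψ q.2.2) :=
    (hψ_meas.comp (measurable_snd.comp measurable_snd)).stronglyMeasurable
  have hΦAP_sm : StronglyMeasurable (fun q : 𝒳A × 𝒳c × 𝒴 => ΦA q.1) :=
    (hΦA_meas.comp measurable_fst).stronglyMeasurable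
  -- integrability of the full feature map
  have hΦP_int : Integrable (fun q : 𝒳A × 𝒳c × 𝒴 => tens (ΦA q.1) (Φc q.2.1)) ℙ :=
    ⟨hΦP_sm.aestronglyMeasurable, HasFiniteIntegral.of_bounded (C := CA * Cc)
      (Filter.Eventually.of_forall fun q => by
        rw [htnorm]
        exact mul_le_mul (hCA _) (hCc _) (norm_nonneg _) hCA0)⟩
  -- rewrite both cross covariances as integrals over ℙ
  rw [hCAY, hCXY]
  simp only [crossCov_map_eq hsml hΦA_sm hψ_sm, crossCov_map_eq hbig hΦ_sm hψ_sm]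
  -- abbreviations for the means
  set mT : T := ∫ z', tens (ΦA z'.1) (Φc z'.2.1) ∂ℙ with hmT
  set mA : HA := ∫ z', ΦA z'.1 ∂ℙ with hmA
  set mψ : G := ∫ z', ψ z'.2.2 ∂ℙ with hmψ
  -- the adjoint sends the T-mean to the HA-mean
  have hadj_mT : (ContinuousLinearMap.adjoint ι) mT = mA := by
    rw [hmT, ← ContinuousLinearMap.integral_comp_comm _ hΦP_int, hmA]
    refine integral_congr_ae (Filter.Eventually.of_forall fun q => ?_)
    dsimp only
    rw [hadj, he, one_smul]
  -- integrability of the operator-valued integrand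
  have hF_sm : StronglyMeasurable
      (fun z : 𝒳A × 𝒳c × 𝒴 => rankOne (tens (ΦA z.1) (Φc z.2.1) - mT) (ψ z.2.2 - mψ)) :=
    continuous_rankOne'.comp_stronglyMeasurable
      ((hΦP_sm.sub stronglyMeasurable_const).prodMk (hψP_sm.sub stronglyMeasurable_const))
  have hF_int : Integrable
      (fun z : 𝒳A × 𝒳c × 𝒴 => rankOne (tens (ΦA z.1) (Φc z.2.1) - mT) (ψ z.2.2 - mψ)) ℙ := by
    refine ⟨hF_sm.aestronglyMeasurable, HasFiniteIntegral.of_bounded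
      (C := (CA * Cc + ‖mT‖) * (Cg + ‖mψ‖)) (Filter.Eventually.of_forall fun z => ?_)⟩
    have h1 : ‖tens (ΦA z.1) (Φc z.2.1) - mT‖ ≤ CA * Cc + ‖mT‖ :=
      (norm_sub_le _ _).trans (add_le_add_left
        (by rw [htnorm]; exact mul_le_mul (hCA _) (hCc _) (norm_nonneg _) hCA0) _)
    have h2 : ‖ψ z.2.2 - mψ‖ ≤ Cg + ‖mψ‖ :=
      (norm_sub_le _ _).trans (add_le_add_left (hCg _) _)
    exact (norm_rankOne_le' _ _).trans
      (mul_le_mul h1 h2 (norm_nonneg _) ((norm_nonneg _).trans h1))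
  -- move the adjoint inside the integral
  have hcomp : (ContinuousLinearMap.adjoint ι).comp
      (∫ z, rankOne (tens (ΦA z.1) (Φc z.2.1) - mT) (ψ z.2.2 - mψ) ∂ℙ)
      = ∫ z, (ContinuousLinearMap.adjoint ι).comp
          (rankOne (tens (ΦA z.1) (Φc z.2.1) - mT) (ψ z.2.2 - mψ)) ∂ℙ := by
    have h := ContinuousLinearMap.integral_comp_comm
      (ContinuousLinearMap.compL ℝ G T HA (ContinuousLinearMap.adjoint ι)) hF_int
    simpa using h.symm
  rw [hcomp]
  refine integral_congr_ae (Filter.Eventually.of_forall fun z => ?_)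
  dsimp only
  rw [comp_rankOne', map_sub, hadj, he, one_smul, hadj_mT]
end

section
/- The cross-covariance operator is Hilbert–Schmidt. Let 𝒳 and 𝒴 be measurable spaces, H and G real separable Hilbert spaces, ℙ_{XY} a joint probability law on 𝒳 × 𝒴, and let Φ : 𝒳 → H and ψ : 𝒴 → G be measurable maps with ∫ ‖Φ(x)‖² ℙ_X(dx) < ∞ and ∫ ‖ψ(y)‖² ℙ_Y(dy) < ∞. Then the cross-covariance operator C_{XY} : G → H is a Hilbert–Schmidt operator, and ‖C_{XY}‖_HS ≤ ∫ ‖Φ(x) − m_X‖ ‖ψ(y) − m_Y‖ ℙ_{XY}(dx, dy), where m_X := ∫ Φ dℙ_X and m_Y := ∫ ψ dℙ_Y. -/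
open MeasureTheory
open scoped RealInnerProductSpace

set_option maxHeartbeats 2000000 in
/-- The cross-covariance operator is Hilbert–Schmidt.  For measurable,
square-integrable feature maps `Φ : 𝒳 → H` and `ψ : 𝒴 → G` and a joint probability law
`μ` on `𝒳 × 𝒴`, the cross-covariance operator `C : G → H` is Hilbert–Schmidt (for any
Hilbert basis `(b i)` of `G`, `Σᵢ ‖C (b i)‖²` is summable), and
`‖C‖_HS ≤ ∫ ‖Φ(x) - m_X‖ ‖ψ(y) - m_Y‖ dμ(x,y)`. -/
theorem crossCov_isHilbertSchmidt
    {𝒳 𝒴 H G : Type*} [MeasurableSpace 𝒳] [MeasurableSpace 𝒴]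
    [NormedAddCommGroup H] [InnerProductSpace ℝ H] [CompleteSpace H]
    [TopologicalSpace.SeparableSpace H] [MeasurableSpace H] [BorelSpace H]
    [NormedAddCommGroup G] [InnerProductSpace ℝ G] [CompleteSpace G]
    [TopologicalSpace.SeparableSpace G] [MeasurableSpace G] [BorelSpace G]
    (μ : Measure (𝒳 × 𝒴)) [IsProbabilityMeasure μ]
    (Φ : 𝒳 → H) (hΦ_meas : Measurable Φ)
    (hΦ_sq : Integrable (fun x => ‖Φ x‖ ^ 2) (μ.map Prod.fst))
    (ψ : 𝒴 → G) (hψ_meas : Measurable ψ)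
    (hψ_sq : Integrable (fun y => ‖ψ y‖ ^ 2) (μ.map Prod.snd))
    (mX : H) (hmX : mX = ∫ x, Φ x ∂(μ.map Prod.fst))
    (mY : G) (hmY : mY = ∫ y, ψ y ∂(μ.map Prod.snd)) :
    ∀ {ι : Type*} (b : HilbertBasis ι ℝ G),
      Summable (fun i : ι => ‖crossCov μ Φ ψ (b i)‖ ^ 2) ∧
      Real.sqrt (∑' i : ι, ‖crossCov μ Φ ψ (b i)‖ ^ 2) ≤
        ∫ q : 𝒳 × 𝒴, ‖Φ q.1 - mX‖ * ‖ψ q.2 - mY‖ ∂μ := by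
  intro ι b
  haveI : SecondCountableTopology H := UniformSpace.secondCountable_of_separable H
  haveI : SecondCountableTopology G := UniformSpace.secondCountable_of_separable G
  set f : 𝒳 × 𝒴 → H := fun q => Φ q.1 - mX with hf_def
  set g : 𝒳 × 𝒴 → G := fun q => ψ q.2 - mY with hg_def
  have hf_m : Measurable f := (hΦ_meas.comp measurable_fst).sub measurable_const
  have hg_m : Measurable g := (hψ_meas.comp measurable_snd).sub measurable_const
  -- integrability of ‖f‖ * ‖g‖
  have hΦ2 : Integrable (fun q : 𝒳 × 𝒴 => ‖Φ q.1‖ ^ 2) μ :=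
    (integrable_map_measure hΦ_sq.aestronglyMeasurable measurable_fst.aemeasurable).mp hΦ_sq
  have hψ2 : Integrable (fun q : 𝒳 × 𝒴 => ‖ψ q.2‖ ^ 2) μ :=
    (integrable_map_measure hψ_sq.aestronglyMeasurable measurable_snd.aemeasurable).mp hψ_sq
  have hf2 : Integrable (fun q => ‖f q‖ ^ 2) μ := by
    refine ((hΦ2.const_mul 2).add (integrable_const (2 * ‖mX‖ ^ 2))).mono'
      ((hf_m.norm.pow_const 2).aestronglyMeasurable) ?_
    filter_upwards with q
    have h1 : ‖f q‖ ≤ ‖Φ q.1‖ + ‖mX‖ := norm_sub_le _ _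
    have h2 : (0:ℝ) ≤ ‖f q‖ := norm_nonneg _
    rw [Real.norm_of_nonneg (by positivity)]
    simp only [Pi.add_apply]
    nlinarith [sq_nonneg (‖Φ q.1‖ - ‖mX‖), mul_self_le_mul_self h2 h1]
  have hg2 : Integrable (fun q => ‖g q‖ ^ 2) μ := by
    refine ((hψ2.const_mul 2).add (integrable_const (2 * ‖mY‖ ^ 2))).mono'
      ((hg_m.norm.pow_const 2).aestronglyMeasurable) ?_
    filter_upwards with q
    have h1 : ‖g q‖ ≤ ‖ψ q.2‖ + ‖mY‖ := norm_sub_le _ _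
    have h2 : (0:ℝ) ≤ ‖g q‖ := norm_nonneg _
    rw [Real.norm_of_nonneg (by positivity)]
    simp only [Pi.add_apply]
    nlinarith [sq_nonneg (‖ψ q.2‖ - ‖mY‖), mul_self_le_mul_self h2 h1]
  have hfg : Integrable (fun q => ‖f q‖ * ‖g q‖) μ := by
    refine ((hf2.add hg2).div_const 2).mono'
      ((hf_m.norm.mul hg_m.norm).aestronglyMeasurable) ?_
    filter_upwards with q
    rw [Real.norm_of_nonneg (by positivity)]
    simp only [Pi.add_apply]
    nlinarith [sq_nonneg (‖f q‖ - ‖g q‖)]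
  -- integrability of the rank-one valued map
  have hcont : Continuous (fun p : H × G => rankOne p.1 p.2) := by
    have : (fun p : H × G => rankOne p.1 p.2) =
        fun p : H × G => ContinuousLinearMap.smulRightL ℝ G H (innerSL ℝ p.2) p.1 := rfl
    rw [this]
    exact (ContinuousLinearMap.smulRightL ℝ G H).continuous₂.comp
      (((innerSL ℝ).continuous.comp continuous_snd).prodMk continuous_fst)
  have h_rank_norm : ∀ q, ‖rankOne (f q) (g q)‖ ≤ ‖f q‖ * ‖g q‖ := by
    intro q
    have heq : ‖rankOne (f q) (g q)‖ = ‖innerSL ℝ (g q)‖ * ‖f q‖ :=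
      ContinuousLinearMap.norm_smulRight_apply _ _
    rw [heq, innerSL_apply_norm (𝕜 := ℝ), mul_comm]
  have h_int_op : Integrable (fun q => rankOne (f q) (g q)) μ := by
    refine hfg.mono' ?_ ?_
    · exact (hcont.comp_stronglyMeasurable
        ((hf_m.stronglyMeasurable).prodMk (hg_m.stronglyMeasurable))).aestronglyMeasurable
    · filter_upwards with q using h_rank_norm q
  -- the operator as an integral
  have hC : crossCov μ Φ ψ = ∫ q, rankOne (f q) (g q) ∂μ := by
    simp only [crossCov, ← hmX, ← hmY]
    rfl
  have h_int_smul : ∀ v : G, Integrable (fun q => ⟪g q, v⟫ • f q) μ := by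
    intro v
    refine (hfg.mul_const ‖v‖).mono'
      (((hg_m.inner measurable_const).smul hf_m).aestronglyMeasurable) ?_
    filter_upwards with q
    rw [norm_smul]
    have := abs_real_inner_le_norm (g q) v
    have h2 : (0:ℝ) ≤ ‖f q‖ := norm_nonneg _
    calc ‖⟪g q, v⟫‖ * ‖f q‖ ≤ (‖g q‖ * ‖v‖) * ‖f q‖ := by
          exact mul_le_mul_of_nonneg_right (by simpa [Real.norm_eq_abs] using this) h2
      _ = ‖f q‖ * ‖g q‖ * ‖v‖ := by ring
  have hC_apply : ∀ v : G, crossCov μ Φ ψ v = ∫ q, ⟪g q, v⟫ • f q ∂μ := by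
    intro v
    rw [hC, ContinuousLinearMap.integral_apply h_int_op]
    rfl
  -- abbreviations
  set I : ℝ := ∫ q : 𝒳 × 𝒴, ‖f q‖ * ‖g q‖ ∂μ with hI_def
  have hI0 : 0 ≤ I := integral_nonneg fun q => by positivity
  set c : ι → H := fun i => crossCov μ Φ ψ (b i) with hc_def
  have hint2 : ∀ (v : G) (w : H), Integrable (fun q => ⟪g q, v⟫ * ⟪w, f q⟫) μ := by
    intro v w
    refine (hfg.mul_const (‖v‖ * ‖w‖)).mono'
      (((hg_m.inner measurable_const).mul (Measurable.inner measurable_const hf_m)).aestronglyMeasurable) ?_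
    filter_upwards with q
    rw [Real.norm_eq_abs, abs_mul]
    have h1 := abs_real_inner_le_norm (g q) v
    have h2 := abs_real_inner_le_norm w (f q)
    calc |⟪g q, v⟫| * |⟪w, f q⟫| ≤ (‖g q‖ * ‖v‖) * (‖w‖ * ‖f q‖) := by
          exact mul_le_mul h1 h2 (abs_nonneg _) (by positivity)
      _ = ‖f q‖ * ‖g q‖ * (‖v‖ * ‖w‖) := by ring
  have hsq : ∀ i, ‖c i‖ ^ 2 = ∫ q, ⟪g q, b i⟫ * ⟪c i, f q⟫ ∂μ := by
    intro i
    have h1 := h_int_smul (b i)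
    have h2 := integral_inner (𝕜 := ℝ) h1 (c i)
    have h3 : ⟪c i, c i⟫ = ∫ q, ⟪c i, ⟪g q, b i⟫ • f q⟫ ∂μ := by
      rw [h2, ← hC_apply (b i)]
    calc ‖c i‖ ^ 2 = ⟪c i, c i⟫ := (real_inner_self_eq_norm_sq _).symm
      _ = ∫ q, ⟪c i, ⟪g q, b i⟫ • f q⟫ ∂μ := h3
      _ = ∫ q, ⟪g q, b i⟫ * ⟪c i, f q⟫ ∂μ := by
          congr 1; funext q; rw [real_inner_smul_right]
  -- uniform bound on partial sums
  have key : ∀ s : Finset ι, ∑ i ∈ s, ‖c i‖ ^ 2 ≤ I ^ 2 := by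
    intro s
    set S : ℝ := ∑ i ∈ s, ‖c i‖ ^ 2 with hS_def
    have hS0 : 0 ≤ S := Finset.sum_nonneg fun i _ => sq_nonneg _
    have hps : S ≤ I * Real.sqrt S := by
      have step1 : S = ∫ q, ∑ i ∈ s, ⟪g q, b i⟫ * ⟪c i, f q⟫ ∂μ := by
        rw [integral_finset_sum s (fun i _ => hint2 (b i) (c i))]
        exact Finset.sum_congr rfl fun i _ => hsq i
      have step2 : ∫ q, ∑ i ∈ s, ⟪g q, b i⟫ * ⟪c i, f q⟫ ∂μ ≤
          ∫ q, (‖f q‖ * ‖g q‖) * Real.sqrt S ∂μ := by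
        refine integral_mono (integrable_finset_sum s fun i _ => hint2 _ _)
          (hfg.mul_const _) ?_
        intro q
        have hA : ∑ i ∈ s, ⟪g q, b i⟫ ^ 2 ≤ ‖g q‖ ^ 2 := by
          have := b.orthonormal.sum_inner_products_le (g q) (s := s)
          simpa [Real.norm_eq_abs, sq_abs, real_inner_comm] using this
        have hB : ∑ i ∈ s, ⟪c i, f q⟫ ^ 2 ≤ S * ‖f q‖ ^ 2 := by
          have : ∀ i ∈ s, ⟪c i, f q⟫ ^ 2 ≤ ‖c i‖ ^ 2 * ‖f q‖ ^ 2 := by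
            intro i _
            have h1 := abs_real_inner_le_norm (c i) (f q)
            nlinarith [abs_nonneg ⟪c i, f q⟫, sq_abs ⟪c i, f q⟫, norm_nonneg (c i),
              norm_nonneg (f q)]
          calc ∑ i ∈ s, ⟪c i, f q⟫ ^ 2 ≤ ∑ i ∈ s, ‖c i‖ ^ 2 * ‖f q‖ ^ 2 :=
                Finset.sum_le_sum this
            _ = S * ‖f q‖ ^ 2 := by rw [← Finset.sum_mul]
        have hCS := Finset.sum_mul_sq_le_sq_mul_sq s (fun i => ⟪g q, b i⟫)
          (fun i => ⟪c i, f q⟫)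
        have hsq2 : (∑ i ∈ s, ⟪g q, b i⟫ * ⟪c i, f q⟫) ^ 2 ≤
            ((‖f q‖ * ‖g q‖) * Real.sqrt S) ^ 2 := by
          have hrhs : ((‖f q‖ * ‖g q‖) * Real.sqrt S) ^ 2 =
              ‖f q‖ ^ 2 * ‖g q‖ ^ 2 * S := by
            rw [mul_pow, mul_pow, Real.sq_sqrt hS0]
          rw [hrhs]
          have h1 : (∑ i ∈ s, ⟪g q, b i⟫ ^ 2) * (∑ i ∈ s, ⟪c i, f q⟫ ^ 2) ≤
              ‖g q‖ ^ 2 * (S * ‖f q‖ ^ 2) := by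
            have hA0 : 0 ≤ ∑ i ∈ s, ⟪g q, b i⟫ ^ 2 :=
              Finset.sum_nonneg fun i _ => sq_nonneg _
            have hB0 : 0 ≤ ∑ i ∈ s, ⟪c i, f q⟫ ^ 2 :=
              Finset.sum_nonneg fun i _ => sq_nonneg _
            exact mul_le_mul hA hB hB0 (by positivity)
          nlinarith
        have hrhs0 : 0 ≤ (‖f q‖ * ‖g q‖) * Real.sqrt S := by positivity
        calc ∑ i ∈ s, ⟪g q, b i⟫ * ⟪c i, f q⟫
            ≤ |∑ i ∈ s, ⟪g q, b i⟫ * ⟪c i, f q⟫| := le_abs_self _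
          _ = Real.sqrt ((∑ i ∈ s, ⟪g q, b i⟫ * ⟪c i, f q⟫) ^ 2) :=
              (Real.sqrt_sq_eq_abs _).symm
          _ ≤ Real.sqrt (((‖f q‖ * ‖g q‖) * Real.sqrt S) ^ 2) :=
              Real.sqrt_le_sqrt hsq2
          _ = (‖f q‖ * ‖g q‖) * Real.sqrt S := by
              rw [Real.sqrt_sq hrhs0]
      have step3 : ∫ q, (‖f q‖ * ‖g q‖) * Real.sqrt S ∂μ = I * Real.sqrt S := by
        rw [integral_mul_const]
      linarith [step1 ▸ le_of_le_of_eq step2 step3]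
    have hsqrtS : Real.sqrt S ≤ I := by
      rcases eq_or_lt_of_le hS0 with h0 | h0
      · rw [← h0, Real.sqrt_zero]; exact hI0
      · have hpos : 0 < Real.sqrt S := Real.sqrt_pos.mpr h0
        have : Real.sqrt S * Real.sqrt S ≤ I * Real.sqrt S := by
          rwa [Real.mul_self_sqrt hS0]
        exact le_of_mul_le_mul_right this hpos
    calc S = Real.sqrt S ^ 2 := (Real.sq_sqrt hS0).symm
      _ ≤ I ^ 2 := pow_le_pow_left₀ (Real.sqrt_nonneg _) hsqrtS 2
  have hsummable : Summable (fun i : ι => ‖crossCov μ Φ ψ (b i)‖ ^ 2) :=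
    summable_of_sum_le (fun i => sq_nonneg _) key
  refine ⟨hsummable, ?_⟩
  have htsum : ∑' i : ι, ‖crossCov μ Φ ψ (b i)‖ ^ 2 ≤ I ^ 2 :=
    tsum_le_of_sum_le' (by positivity) key
  calc Real.sqrt (∑' i : ι, ‖crossCov μ Φ ψ (b i)‖ ^ 2)
      ≤ Real.sqrt (I ^ 2) := Real.sqrt_le_sqrt htsum
    _ = I := Real.sqrt_sq hI0
end
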